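/- A function f : S^{3×3} → ℝ is symmetric polyconvex if and only if there exists a convex function g : S^{3×3} × S^{3×3} → ℝ such that (1) for all ε, η ∈ S^{3×3}, every matrix B ∈ S^{3×3} satisfying g(ε, η̃) ≥ g(ε, η) + B:(η̃ − η) for all η̃ ∈ S^{3×3} is negative semi-definite, and (2) f(ε) = g(ε, cof ε) for all ε ∈ S^{3×3}. -/

import Mathlib

open Matrix

/-- The symmetric part `(F + Fᵀ)/2` of a 3×3 matrix. -/
noncomputable def symPart (F : Matrix (Fin 3) (Fin 3) ℝ) : Matrix (Fin 3) (Fin 3) ℝ :=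
  (1 / 2 : ℝ) • (F + Fᵀ)

/-- The cofactor matrix: `(cof F)_{ij} = (-1)^{i+j}` times the determinant of the 2×2
matrix obtained from `F` by deleting row `i` and column `j`. -/
noncomputable def cof (F : Matrix (Fin 3) (Fin 3) ℝ) : Matrix (Fin 3) (Fin 3) ℝ :=
  Matrix.of fun i j =>
    (-1 : ℝ) ^ ((i : ℕ) + (j : ℕ)) * (F.submatrix i.succAbove j.succAbove).det

/-- Frobenius inner product `A:B = Σ_{i,j} A_{ij} B_{ij}` of 3×3 matrices. -/
def mdot (A B : Matrix (Fin 3) (Fin 3) ℝ) : ℝ := ∑ i, ∑ j, A i j * B i j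

/-- A function `W : ℝ^{3×3} → ℝ` is polyconvex if there is a convex function
`G : ℝ^{3×3} × ℝ^{3×3} × ℝ → ℝ` with `W F = G (F, cof F, det F)` for all `F`. -/
def Polyconvex3 (W : Matrix (Fin 3) (Fin 3) ℝ → ℝ) : Prop :=
  ∃ G : Matrix (Fin 3) (Fin 3) ℝ × Matrix (Fin 3) (Fin 3) ℝ × ℝ → ℝ,
    ConvexOn ℝ Set.univ G ∧ ∀ F : Matrix (Fin 3) (Fin 3) ℝ, W F = G (F, cof F, F.det)

/-- `f : S^{3×3} → ℝ` is symmetric polyconvex if `F ↦ f (Fˢ)` is polyconvex. -/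
def SymPolyconvex3 (f : Matrix (Fin 3) (Fin 3) ℝ → ℝ) : Prop :=
  Polyconvex3 (fun F => f (symPart F))

/-- `B ∈ S^{3×3}` is negative semi-definite: `Bx·x ≤ 0` for all `x ∈ ℝ³`. -/
def NegSemidefM (B : Matrix (Fin 3) (Fin 3) ℝ) : Prop :=
  ∀ x : Fin 3 → ℝ, B.mulVec x ⬝ᵥ x ≤ 0

/-- `A ∈ S^{3×3}` is positive semi-definite: `Ax·x ≥ 0` for all `x ∈ ℝ³`. -/
def PosSemidefM (A : Matrix (Fin 3) (Fin 3) ℝ) : Prop :=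
  ∀ x : Fin 3 → ℝ, 0 ≤ A.mulVec x ⬝ᵥ x

/-- The symmetrized tensor product `a ⊙ b = (a⊗b + b⊗a)/2`. -/
noncomputable def symProd (a b : Fin 3 → ℝ) : Matrix (Fin 3) (Fin 3) ℝ :=
  (1 / 2 : ℝ) • (vecMulVec a b + vecMulVec b a)

/-- `f : S^{3×3} → ℝ` is symmetric rank-one convex if `t ↦ f (ε + t a⊙b)` is convex
for every symmetric `ε` and all `a, b ∈ ℝ³`. -/
def SymRankOneConvex3 (f : Matrix (Fin 3) (Fin 3) ℝ → ℝ) : Prop :=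
  ∀ ε : Matrix (Fin 3) (Fin 3) ℝ, ε.IsSymm → ∀ a b : Fin 3 → ℝ,
    ConvexOn ℝ Set.univ (fun t : ℝ => f (ε + t • symProd a b))

/-!
If `f` is symmetric polyconvex, take for `g` the supremum of the affine minorants
`(ε, η) ↦ A : ε + B : η + e` of `f`, i.e. those with `A : F + B : cof F + e ≤ f Fˢ` for all `F`.
Testing a minorant `A : F + B : cof F + c det F + e` of `f` on `F = s • 1 + skewOf w`, whose
symmetric part is `s • 1` while `cof F` and `det F` grow quadratically in `w`, forces `c = 0` and
`B ≤ 0`; hence polyconvexity supplies exact minorants at `(ε, cof ε)`, and the supremum decreases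
along positive semidefinite directions in `η`, so its `η`-subgradients are negative semidefinite.
It is finite because every symmetric matrix is a sum of three cofactor matrices of symmetric
matrices.

Conversely, with `w` the axial vector of `F`, `cof Fˢ = (cof F)ˢ - w ⊗ w`. As `g` is nonincreasing
in `η` along positive semidefinite directions and `F ↦ -w ⊗ w` is concave in the Loewner order,
`(F, H, d) ↦ g (Fˢ, Hˢ - w ⊗ w)` is convex, and it represents `F ↦ f Fˢ`.
-/

theorem ConvexOn.exists_subgradient {E : Type*} [NormedAddCommGroup E] [NormedSpace ℝ E]
    [FiniteDimensional ℝ E] {G : E → ℝ} (hG : ConvexOn ℝ Set.univ G) (x₀ : E) :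
    ∃ φ : StrongDual ℝ E, ∀ x, G x₀ + φ (x - x₀) ≤ G x := by
  have hc : Continuous G := hG.locallyLipschitz.continuous
  have hconv : Convex ℝ {p : E × ℝ | G p.1 < p.2} := by
    simpa using hG.convex_strict_epigraph
  obtain ⟨Φ, hΦ⟩ := geometric_hahn_banach_open_point hconv
    (isOpen_lt (hc.comp continuous_fst) continuous_snd) (x := (x₀, G x₀)) (by simp)
  set α := Φ (0, 1)
  have hsplit (x : E) (t : ℝ) : Φ (x, t) = Φ (x, 0) + t * α := by
    rw [← smul_eq_mul, ← map_smul, ← map_add]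
    simp
  have hα : α < 0 := by
    have := hΦ (x₀, G x₀ + 1) (by simp)
    rw [hsplit, hsplit x₀ (G x₀)] at this
    linarith
  -- the strict epigraph inequality at heights `G x + δ`, in the limit `δ → 0`
  have hsupp (x : E) : Φ (x, 0) + G x * α ≤ Φ (x₀, 0) + G x₀ * α := by
    refine le_of_forall_pos_lt_add fun δ hδ => ?_
    have := hΦ (x, G x + δ / -α) (by simp [div_pos hδ (neg_pos.2 hα)])
    have hδα : δ / -α * α = -δ := by field_simp [hα.ne]
    rw [hsplit, hsplit x₀ (G x₀), add_mul, hδα] at this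
    linarith
  refine ⟨(-α)⁻¹ • Φ.comp (.inl ℝ E ℝ), fun x => ?_⟩
  have key : Φ (x, 0) - Φ (x₀, 0) ≤ (G x - G x₀) * -α := by linarith [hsupp x]
  have hφ : ((-α)⁻¹ • Φ.comp (.inl ℝ E ℝ)) (x - x₀) = (Φ (x, 0) - Φ (x₀, 0)) / -α := by
    simp [div_eq_inv_mul, ← map_sub]
  linarith [(div_le_iff₀ (neg_pos.2 hα)).2 key]

theorem ConvexOn.sSup_image {ι E : Type*} [AddCommMonoid E] [Module ℝ E] {s : Set E}
    {S : Set ι} {ℓ : ι → E → ℝ} (hS : S.Nonempty) (hℓ : ∀ i ∈ S, ConvexOn ℝ s (ℓ i))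
    (hbdd : ∀ x ∈ s, BddAbove ((ℓ · x) '' S)) :
    ConvexOn ℝ s fun x => sSup ((ℓ · x) '' S) := by
  refine ⟨(hℓ _ hS.some_mem).1, fun x hx y hy a b ha hb hab => csSup_le (hS.image _) ?_⟩
  rintro _ ⟨i, hi, rfl⟩
  calc ℓ i (a • x + b • y) ≤ a • ℓ i x + b • ℓ i y := (hℓ i hi).2 hx hy ha hb hab
    _ ≤ a • sSup ((ℓ · x) '' S) + b • sSup ((ℓ · y) '' S) := by
      gcongr
      · exact le_csSup (hbdd x hx) ⟨i, hi, rfl⟩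
      · exact le_csSup (hbdd y hy) ⟨i, hi, rfl⟩

lemma nonpos_of_forall_mul_sq_add_le {a b K : ℝ} (h : ∀ t : ℝ, a * t ^ 2 + b ≤ K) : a ≤ 0 := by
  by_contra! ha
  have := h (Real.sqrt ((K - b + 1) / a))
  rw [Real.sq_sqrt (div_nonneg (by linarith [h 0]) ha.le), mul_div_cancel₀ _ ha.ne'] at this
  linarith

lemma eq_zero_of_forall_add_mul_nonpos {b c : ℝ} (h : ∀ s : ℝ, b + c * s ≤ 0) : c = 0 := by
  by_contra hc
  have := h ((1 - b) / c)
  rw [mul_div_cancel₀ _ hc] at this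
  linarith

theorem Matrix.exists_det_add_smul_one_pos {n : Type*} [Fintype n] [DecidableEq n] [Nonempty n]
    (M : Matrix n n ℝ) : ∃ t : ℝ, 0 ≤ t ∧ 0 < (M + t • 1).det := by
  have heval (t : ℝ) : (-M).charpoly.eval t = (M + t • 1).det := by
    rw [eval_charpoly, scalar_apply, ← smul_one_eq_diagonal, sub_neg_eq_add, add_comm]
  have hdeg : 0 < (-M).charpoly.degree := by
    rw [charpoly_degree_eq_dim]; exact_mod_cast Fintype.card_pos
  have hlim := Polynomial.tendsto_atTop_of_leadingCoeff_nonneg _ hdeg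
    (by rw [(charpoly_monic _).leadingCoeff]; exact zero_le_one)
  obtain ⟨t, ht, ht₀⟩ := ((hlim.eventually_gt_atTop 0).and (Filter.eventually_ge_atTop 0)).exists
  exact ⟨t, ht₀, heval t ▸ ht⟩

local notation "M₃" => Matrix (Fin 3) (Fin 3) ℝ

/-- The matrix of `v ↦ w × v`. -/
noncomputable def skewOf (w : Fin 3 → ℝ) : M₃ := !![0, -w 2, w 1; w 2, 0, -w 0; -w 1, w 0, 0]

/-- The axial vector of the skew part: `F - symPart F = skewOf (axialVec F)`. -/
noncomputable def axialVec (F : M₃) : Fin 3 → ℝ :=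
  ![(F 2 1 - F 1 2) / 2, (F 0 2 - F 2 0) / 2, (F 1 0 - F 0 1) / 2]

lemma skewOf_neg (w : Fin 3 → ℝ) : skewOf (-w) = -skewOf w := by
  ext i j; fin_cases i <;> fin_cases j <;> simp [skewOf]

lemma axialVec_add_smul (a b : ℝ) (X Y : M₃) :
    axialVec (a • X + b • Y) = a • axialVec X + b • axialVec Y := by
  funext i; fin_cases i <;> simp [axialVec] <;> ring

lemma vecMulVec_add_smul_self {a b : ℝ} (hab : a + b = 1) (u v : Fin 3 → ℝ) :
    vecMulVec (a • u + b • v) (a • u + b • v) =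
      a • vecMulVec u u + b • vecMulVec v v - (a * b) • vecMulVec (u - v) (u - v) := by
  obtain rfl : b = 1 - a := by linarith
  ext i j; simp [vecMulVec]; ring

lemma isSymm_vecMulVec_self (x : Fin 3 → ℝ) : (vecMulVec x x).IsSymm := by
  rw [IsSymm, transpose_vecMulVec]

lemma isSymm_symPart (F : M₃) : (symPart F).IsSymm := by
  rw [IsSymm, symPart, transpose_smul, transpose_add, transpose_transpose, add_comm]

lemma Matrix.IsSymm.symPart_eq {F : M₃} (h : F.IsSymm) : symPart F = F := by
  rw [symPart, h.eq]; ext i j; simp; ring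

lemma symPart_add_smul (a b : ℝ) (X Y : M₃) :
    symPart (a • X + b • Y) = a • symPart X + b • symPart Y := by
  ext i j; simp [symPart]; ring

lemma symPart_smul_one_add_skewOf (s : ℝ) (w : Fin 3 → ℝ) :
    symPart (s • (1 : M₃) + skewOf w) = s • 1 := by
  ext i j; fin_cases i <;> fin_cases j <;> simp [symPart, skewOf] <;> ring

lemma mdot_add_right (A X Y : M₃) : mdot A (X + Y) = mdot A X + mdot A Y := by
  simp only [mdot, Matrix.add_apply, mul_add, Finset.sum_add_distrib]

lemma mdot_smul_right (A : M₃) (c : ℝ) (X : M₃) : mdot A (c • X) = c * mdot A X := by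
  simp only [mdot, Matrix.smul_apply, smul_eq_mul, Finset.mul_sum, mul_left_comm]

lemma mdot_sub_right (A X Y : M₃) : mdot A (X - Y) = mdot A X - mdot A Y := by
  simp only [mdot, Matrix.sub_apply, mul_sub, Finset.sum_sub_distrib]

lemma mdot_neg_right (A X : M₃) : mdot A (-X) = -mdot A X := by
  simp only [mdot, Matrix.neg_apply, mul_neg, Finset.sum_neg_distrib]

lemma mdot_vecMulVec_self (B : M₃) (x : Fin 3 → ℝ) : mdot B (vecMulVec x x) = B *ᵥ x ⬝ᵥ x := by
  simp [mdot, vecMulVec, mulVec, dotProduct, Fin.sum_univ_three]; ring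

lemma mdot_symPart_left (A : M₃) {X : M₃} (hX : X.IsSymm) : mdot (symPart A) X = mdot A X := by
  have hT : mdot Aᵀ X = mdot A X := by
    rw [mdot, Finset.sum_comm]; simp only [transpose_apply, ← hX.apply]; rfl
  simp only [symPart, mdot, Matrix.smul_apply, Matrix.add_apply, smul_eq_mul] at hT ⊢
  simp only [add_mul, mul_assoc, ← Finset.mul_sum, Finset.sum_add_distrib, hT]
  ring

lemma LinearMap.exists_mdot_eq (ψ : M₃ →ₗ[ℝ] ℝ) : ∃ A : M₃, ∀ X, ψ X = mdot A X := by
  refine ⟨of fun i j => ψ (Matrix.single i j 1), fun X => ?_⟩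
  conv_lhs => rw [matrix_eq_sum_single X]
  have hsingle (i j : Fin 3) : Matrix.single i j (X i j) = X i j • Matrix.single i j (1 : ℝ) := by
    rw [Matrix.smul_single, smul_eq_mul, mul_one]
  simp only [hsingle, map_sum, map_smul, smul_eq_mul, mdot, Matrix.of_apply, mul_comm]

lemma LinearMap.exists_isSymm_mdot_eq (ψ : M₃ →ₗ[ℝ] ℝ) :
    ∃ B : M₃, B.IsSymm ∧ ∀ X, X.IsSymm → ψ X = mdot B X := by
  obtain ⟨A, hA⟩ := ψ.exists_mdot_eq
  exact ⟨symPart A, isSymm_symPart A, fun X hX => by rw [hA, mdot_symPart_left A hX]⟩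

lemma LinearMap.exists_mdot_eq_prod (φ : M₃ × M₃ × ℝ →ₗ[ℝ] ℝ) :
    ∃ (A B : M₃) (c : ℝ), ∀ X H d, φ (X, H, d) = mdot A X + mdot B H + c * d := by
  obtain ⟨A, hA⟩ := (φ.comp (.inl ℝ M₃ (M₃ × ℝ))).exists_mdot_eq
  obtain ⟨B, hB⟩ := (φ.comp ((LinearMap.inr ℝ M₃ (M₃ × ℝ)).comp (.inl ℝ M₃ ℝ))).exists_mdot_eq
  refine ⟨A, B, φ (0, 0, 1), fun X H d => ?_⟩
  have hsplit : ((X, H, d) : M₃ × M₃ × ℝ) = (X, 0, 0) + (0, H, 0) + d • (0, 0, 1) := by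
    simp
  rw [hsplit, map_add, map_add, map_smul, smul_eq_mul, mul_comm]
  simp [← hA, ← hB]
  rfl

lemma cof_eq_transpose_adjugate (F : M₃) : cof F = (adjugate F)ᵀ := by
  ext i j
  fin_cases i <;> fin_cases j <;>
    simp [cof, adjugate_fin_three, det_fin_two, Fin.succAbove] <;> ring

lemma Matrix.IsSymm.cof {N : M₃} (hN : N.IsSymm) : (cof N).IsSymm := by
  rw [IsSymm, cof_eq_transpose_adjugate, transpose_transpose, adjugate_transpose, hN.eq]

lemma cof_smul (c : ℝ) (X : M₃) : cof (c • X) = c ^ 2 • cof X := by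
  simp [cof_eq_transpose_adjugate, adjugate_smul]

lemma cof_cof (N : M₃) : cof (cof N) = N.det • N := by
  rw [cof_eq_transpose_adjugate, cof_eq_transpose_adjugate, ← adjugate_transpose,
    transpose_transpose, adjugate_adjugate _ (by simp)]
  simp

lemma cof_add_add_cof_sub (X Y : M₃) : cof (X + Y) + cof (X - Y) = (2 : ℝ) • (cof X + cof Y) := by
  ext i j
  fin_cases i <;> fin_cases j <;> simp [cof, det_fin_two, Fin.succAbove] <;> ring

lemma cof_symPart (F : M₃) :
    cof (symPart F) = symPart (cof F) - vecMulVec (axialVec F) (axialVec F) := by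
  ext i j
  fin_cases i <;> fin_cases j <;>
    simp [cof, symPart, axialVec, vecMulVec, det_fin_two, Fin.succAbove] <;> ring

lemma cof_smul_one_add_skewOf (s : ℝ) (w : Fin 3 → ℝ) :
    cof (s • (1 : M₃) + skewOf w) = s ^ 2 • (1 : M₃) + vecMulVec w w + s • skewOf w := by
  ext i j
  fin_cases i <;> fin_cases j <;>
    simp [cof, skewOf, vecMulVec, det_fin_two, one_apply, Fin.succAbove] <;> ring

lemma det_smul_one_add_skewOf (s : ℝ) (w : Fin 3 → ℝ) :
    (s • (1 : M₃) + skewOf w).det = s ^ 3 + s * (w ⬝ᵥ w) := by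
  simp [det_fin_three, skewOf, dotProduct, Fin.sum_univ_three]; ring

lemma cof_diagonal_add_cof_diagonal :
    cof (diagonal ![1, 1, -1]) + cof (diagonal ![1, -2, 0]) = -1 := by
  ext i j
  fin_cases i <;> fin_cases j <;> simp [cof, det_fin_two, Fin.succAbove, diagonal]
  all_goals norm_num

section Minorant

variable {f : M₃ → ℝ} {A B : M₃} {c e : ℝ}

lemma minorant_smul_one_add_skewOf
    (h : ∀ F : M₃, mdot A F + mdot B (cof F) + c * F.det + e ≤ f (symPart F)) (s : ℝ)
    (w : Fin 3 → ℝ) :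
    mdot A (s • 1) + mdot B (s ^ 2 • 1) + (B *ᵥ w ⬝ᵥ w + c * s * (w ⬝ᵥ w)) + c * s ^ 3 + e ≤
      f (s • 1) := by
  have h₁ := h (s • 1 + skewOf w)
  have h₂ := h (s • 1 + skewOf (-w))
  rw [symPart_smul_one_add_skewOf, cof_smul_one_add_skewOf, det_smul_one_add_skewOf] at h₁ h₂
  simp only [vecMulVec_neg, neg_vecMulVec, neg_neg, dotProduct_neg, neg_dotProduct,
    skewOf_neg] at h₂
  simp only [mdot_add_right, mdot_neg_right, mdot_smul_right, mdot_vecMulVec_self] at h₁ h₂ ⊢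
  linarith

lemma mulVec_dotProduct_add_le_zero_of_minorant
    (h : ∀ F : M₃, mdot A F + mdot B (cof F) + c * F.det + e ≤ f (symPart F)) (s : ℝ)
    (w : Fin 3 → ℝ) : B *ᵥ w ⬝ᵥ w + c * s * (w ⬝ᵥ w) ≤ 0 := by
  refine nonpos_of_forall_mul_sq_add_le (b := mdot A (s • 1) + mdot B (s ^ 2 • 1) + c * s ^ 3 + e)
    (K := f (s • 1)) fun t => ?_
  have := minorant_smul_one_add_skewOf h s (t • w)
  simp only [mulVec_smul, smul_dotProduct, dotProduct_smul, smul_eq_mul] at this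
  linarith

lemma det_coeff_eq_zero_of_minorant
    (h : ∀ F : M₃, mdot A F + mdot B (cof F) + c * F.det + e ≤ f (symPart F)) : c = 0 :=
  eq_zero_of_forall_add_mul_nonpos fun s => by
    simpa [mul_comm] using mulVec_dotProduct_add_le_zero_of_minorant h s (Pi.single 0 1)

lemma negSemidefM_of_minorant
    (h : ∀ F : M₃, mdot A F + mdot B (cof F) + c * F.det + e ≤ f (symPart F)) : NegSemidefM B :=
  fun x => by simpa using mulVec_dotProduct_add_le_zero_of_minorant h 0 x

end Minorant

lemma exists_isSymm_cof_eq {M : M₃} (hM : M.IsSymm) (hdet : 0 < M.det) :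
    ∃ σ : M₃, σ.IsSymm ∧ cof σ = M := by
  refine ⟨(Real.sqrt M.det)⁻¹ • cof M, hM.cof.smul _, ?_⟩
  rw [cof_smul, cof_cof, smul_smul, inv_pow, Real.sq_sqrt hdet.le, inv_mul_cancel₀ hdet.ne',
    one_smul]

theorem exists_isSymm_cof_add_cof_add_cof_eq {N : M₃} (hN : N.IsSymm) :
    ∃ σ₀ σ₁ σ₂ : M₃, σ₀.IsSymm ∧ σ₁.IsSymm ∧ σ₂.IsSymm ∧ cof σ₀ + cof σ₁ + cof σ₂ = N := by
  obtain ⟨t, ht, hdet⟩ := N.exists_det_add_smul_one_pos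
  obtain ⟨σ₀, hσ₀, hcof⟩ := exists_isSymm_cof_eq (hN.add (isSymm_one.smul t)) hdet
  refine ⟨σ₀, Real.sqrt t • diagonal ![1, 1, -1], Real.sqrt t • diagonal ![1, -2, 0], hσ₀,
    (isSymm_diagonal _).smul _, (isSymm_diagonal _).smul _, ?_⟩
  rw [add_assoc, cof_smul, cof_smul, ← smul_add, cof_diagonal_add_cof_diagonal, hcof,
    Real.sq_sqrt ht]
  simp

def evalMinorant (q : M₃ × M₃ × ℝ) (p : M₃ × M₃) : ℝ := mdot q.1 p.1 + mdot q.2.1 p.2 + q.2.2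

def symPolyMinorants (f : M₃ → ℝ) : Set (M₃ × M₃ × ℝ) :=
  {q | ∀ F, evalMinorant q (F, cof F) ≤ f (symPart F)}

noncomputable def symPolyEnvelope (f : M₃ → ℝ) (p : M₃ × M₃) : ℝ :=
  sSup ((evalMinorant · p) '' symPolyMinorants f)

def PartialSubgradientsNegSemidef (g : M₃ × M₃ → ℝ) : Prop :=
  ∀ ε η : M₃, ε.IsSymm → η.IsSymm → ∀ B : M₃, B.IsSymm →
    (∀ η' : M₃, η'.IsSymm → g (ε, η) + mdot B (η' - η) ≤ g (ε, η')) → NegSemidefM B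

section Envelope

variable {f : M₃ → ℝ} {q : M₃ × M₃ × ℝ}

lemma convexOn_evalMinorant (q : M₃ × M₃ × ℝ) {s : Set (M₃ × M₃)} (hs : Convex ℝ s) :
    ConvexOn ℝ s (evalMinorant q) := by
  refine ⟨hs, fun x _ y _ a b _ _ hab => le_of_eq ?_⟩
  simp only [evalMinorant, Prod.fst_add, Prod.snd_add, Prod.smul_fst, Prod.smul_snd,
    mdot_add_right, mdot_smul_right, smul_eq_mul]
  linear_combination (-q.2.2) * hab

lemma negSemidefM_of_mem_symPolyMinorants (hq : q ∈ symPolyMinorants f) : NegSemidefM q.2.1 :=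
  negSemidefM_of_minorant (A := q.1) (c := 0) (e := q.2.2) fun F => by
    simpa [evalMinorant] using hq F

lemma evalMinorant_cof_add_cof_le (hq : q ∈ symPolyMinorants f) {ε Y : M₃} (hε : ε.IsSymm)
    (hY : Y.IsSymm) :
    evalMinorant q (ε, cof ε + cof Y) ≤ (f (ε + Y) + f (ε - Y)) / 2 := by
  have h₁ := hq (ε + Y)
  have h₂ := hq (ε - Y)
  rw [(hε.add hY).symPart_eq] at h₁
  rw [(hε.sub hY).symPart_eq] at h₂
  have hcof := congrArg (mdot q.2.1) (cof_add_add_cof_sub ε Y)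
  simp only [evalMinorant, mdot_add_right, mdot_sub_right, mdot_smul_right] at h₁ h₂ hcof ⊢
  linarith

-- `η` is the average of the three points `cof ε + cof σᵢ`, where `3 • (η - cof ε) = ∑ cof σᵢ`.
lemma bddAbove_evalMinorant_image {ε η : M₃} (hε : ε.IsSymm) (hη : η.IsSymm) :
    BddAbove ((evalMinorant · (ε, η)) '' symPolyMinorants f) := by
  obtain ⟨σ₀, σ₁, σ₂, h₀, h₁, h₂, hσ⟩ :=
    exists_isSymm_cof_add_cof_add_cof_eq ((hη.sub hε.cof).smul (3 : ℝ))
  refine ⟨((f (ε + σ₀) + f (ε - σ₀)) + (f (ε + σ₁) + f (ε - σ₁)) + (f (ε + σ₂) + f (ε - σ₂))) / 6,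
    ?_⟩
  rintro _ ⟨q, hq, rfl⟩
  have hB := congrArg (mdot q.2.1) hσ
  have e₀ := evalMinorant_cof_add_cof_le hq hε h₀
  have e₁ := evalMinorant_cof_add_cof_le hq hε h₁
  have e₂ := evalMinorant_cof_add_cof_le hq hε h₂
  simp only [evalMinorant, mdot_add_right, mdot_sub_right, mdot_smul_right] at hB e₀ e₁ e₂ ⊢
  linarith

lemma evalMinorant_le_symPolyEnvelope (hq : q ∈ symPolyMinorants f) {ε η : M₃}
    (hε : ε.IsSymm) (hη : η.IsSymm) : evalMinorant q (ε, η) ≤ symPolyEnvelope f (ε, η) :=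
  le_csSup (bddAbove_evalMinorant_image hε hη) ⟨q, hq, rfl⟩

end Envelope

lemma convex_setOf_isSymm_prod : Convex ℝ {p : M₃ × M₃ | p.1.IsSymm ∧ p.2.IsSymm} :=
  fun _ hp _ hq a b _ _ _ => ⟨(hp.1.smul a).add (hq.1.smul b), (hp.2.smul a).add (hq.2.smul b)⟩

attribute [local instance] Matrix.normedAddCommGroup Matrix.normedSpace

section Forward

variable {f : M₃ → ℝ}

lemma SymPolyconvex3.exists_mem_symPolyMinorants (hf : SymPolyconvex3 f) {ε : M₃}
    (hε : ε.IsSymm) : ∃ q ∈ symPolyMinorants f, evalMinorant q (ε, cof ε) = f ε := by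
  obtain ⟨G, hG, hGf⟩ := hf
  obtain ⟨φ, hφ⟩ := hG.exists_subgradient (ε, cof ε, ε.det)
  obtain ⟨A, B, c, hφABc⟩ := (φ : M₃ × M₃ × ℝ →ₗ[ℝ] ℝ).exists_mdot_eq_prod
  simp only [ContinuousLinearMap.coe_coe] at hφABc
  set e := f ε - mdot A ε - mdot B (cof ε) - c * ε.det
  have hmin (F : M₃) : mdot A F + mdot B (cof F) + c * F.det + e ≤ f (symPart F) := by
    have := hφ (F, cof F, F.det)
    rw [map_sub, hφABc, hφABc, ← hGf, ← hGf] at this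
    simp only [hε.symPart_eq] at this
    linarith
  have hc : c = 0 := det_coeff_eq_zero_of_minorant hmin
  refine ⟨(A, B, e), fun F => ?_, ?_⟩
  · simpa [evalMinorant, hc] using hmin F
  · simp only [evalMinorant, e, hc]
    ring

lemma SymPolyconvex3.symPolyMinorants_nonempty (hf : SymPolyconvex3 f) :
    (symPolyMinorants f).Nonempty :=
  let ⟨q, hq, _⟩ := hf.exists_mem_symPolyMinorants isSymm_zero
  ⟨q, hq⟩

lemma SymPolyconvex3.symPolyEnvelope_cof_eq (hf : SymPolyconvex3 f) {ε : M₃} (hε : ε.IsSymm) :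
    symPolyEnvelope f (ε, cof ε) = f ε := by
  refine le_antisymm (csSup_le (hf.symPolyMinorants_nonempty.image _) ?_) ?_
  · rintro _ ⟨q, hq, rfl⟩
    simpa [hε.symPart_eq] using hq ε
  · obtain ⟨q, hq, hqε⟩ := hf.exists_mem_symPolyMinorants hε
    exact hqε ▸ evalMinorant_le_symPolyEnvelope hq hε hε.cof

lemma convexOn_symPolyEnvelope (hne : (symPolyMinorants f).Nonempty) :
    ConvexOn ℝ {p : M₃ × M₃ | p.1.IsSymm ∧ p.2.IsSymm} (symPolyEnvelope f) :=
  ConvexOn.sSup_image hne (fun q _ => convexOn_evalMinorant q convex_setOf_isSymm_prod)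
    fun _ hp => bddAbove_evalMinorant_image hp.1 hp.2

lemma symPolyEnvelope_add_vecMulVec_le (hne : (symPolyMinorants f).Nonempty) {ε η : M₃}
    (hε : ε.IsSymm) (hη : η.IsSymm) (x : Fin 3 → ℝ) :
    symPolyEnvelope f (ε, η + vecMulVec x x) ≤ symPolyEnvelope f (ε, η) := by
  refine csSup_le (hne.image _) ?_
  rintro _ ⟨q, hq, rfl⟩
  calc evalMinorant q (ε, η + vecMulVec x x) = evalMinorant q (ε, η) + q.2.1 *ᵥ x ⬝ᵥ x := by
        simp only [evalMinorant, mdot_add_right, mdot_vecMulVec_self]; ring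
    _ ≤ evalMinorant q (ε, η) := by linarith [negSemidefM_of_mem_symPolyMinorants hq x]
    _ ≤ symPolyEnvelope f (ε, η) := evalMinorant_le_symPolyEnvelope hq hε hη

lemma partialSubgradientsNegSemidef_symPolyEnvelope (hne : (symPolyMinorants f).Nonempty) :
    PartialSubgradientsNegSemidef (symPolyEnvelope f) := by
  intro ε η hε hη B _ hB x
  have := hB (η + vecMulVec x x) (hη.add (isSymm_vecMulVec_self x))
  rw [add_sub_cancel_left, mdot_vecMulVec_self] at this
  linarith [symPolyEnvelope_add_vecMulVec_le hne hε hη x]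

end Forward

section Backward

variable {g : M₃ × M₃ → ℝ}

lemma exists_isSymm_partialSubgradient
    (hg : ConvexOn ℝ {p : M₃ × M₃ | p.1.IsSymm ∧ p.2.IsSymm} g) {ε ζ : M₃} (hε : ε.IsSymm)
    (hζ : ζ.IsSymm) :
    ∃ B : M₃, B.IsSymm ∧ ∀ η : M₃, η.IsSymm → g (ε, ζ) + mdot B (η - ζ) ≤ g (ε, η) := by
  have hconv : ConvexOn ℝ Set.univ fun η => g (ε, symPart η) := by
    refine ⟨convex_univ, fun x _ y _ a b ha hb hab => ?_⟩
    have hcomb : (ε, symPart (a • x + b • y)) = a • (ε, symPart x) + b • (ε, symPart y) := by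
      rw [symPart_add_smul, Prod.smul_mk, Prod.smul_mk, Prod.mk_add_mk, ← add_smul, hab, one_smul]
    dsimp only
    rw [hcomb]
    exact hg.2 ⟨hε, isSymm_symPart x⟩ ⟨hε, isSymm_symPart y⟩ ha hb hab
  obtain ⟨φ, hφ⟩ := hconv.exists_subgradient ζ
  obtain ⟨B, hB, hφB⟩ := (φ : M₃ →ₗ[ℝ] ℝ).exists_isSymm_mdot_eq
  refine ⟨B, hB, fun η hη => ?_⟩
  have := hφ η
  rwa [hζ.symPart_eq, hη.symPart_eq, ← ContinuousLinearMap.coe_coe, hφB _ (hη.sub hζ)] at this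

lemma PartialSubgradientsNegSemidef.le_of_add_smul_vecMulVec
    (hNSD : PartialSubgradientsNegSemidef g)
    (hg : ConvexOn ℝ {p : M₃ × M₃ | p.1.IsSymm ∧ p.2.IsSymm} g) {ε ζ : M₃} (hε : ε.IsSymm)
    (hζ : ζ.IsSymm) {c : ℝ} (hc : 0 ≤ c) (v : Fin 3 → ℝ) :
    g (ε, ζ + c • vecMulVec v v) ≤ g (ε, ζ) := by
  have hζ' : (ζ + c • vecMulVec v v).IsSymm := hζ.add ((isSymm_vecMulVec_self v).smul c)
  obtain ⟨B, hB, hsub⟩ := exists_isSymm_partialSubgradient hg hε hζ'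
  have hBv : B *ᵥ v ⬝ᵥ v ≤ 0 := hNSD ε _ hε hζ' B hB hsub v
  have := hsub ζ hζ
  rw [sub_add_cancel_left, mdot_neg_right, mdot_smul_right, mdot_vecMulVec_self] at this
  nlinarith

/-- Chosen so that `symCofLift (F, cof F, d) = (symPart F, cof (symPart F))`, by `cof_symPart`. -/
noncomputable def symCofLift (x : M₃ × M₃ × ℝ) : M₃ × M₃ :=
  (symPart x.1, symPart x.2.1 - vecMulVec (axialVec x.1) (axialVec x.1))

lemma isSymm_symCofLift (x : M₃ × M₃ × ℝ) :
    (symCofLift x).1.IsSymm ∧ (symCofLift x).2.IsSymm :=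
  ⟨isSymm_symPart _, (isSymm_symPart _).sub (isSymm_vecMulVec_self _)⟩

lemma symCofLift_add_smul {a b : ℝ} (hab : a + b = 1) (x y : M₃ × M₃ × ℝ) :
    symCofLift (a • x + b • y) =
      ((a • symCofLift x + b • symCofLift y).1, (a • symCofLift x + b • symCofLift y).2 +
        (a * b) • vecMulVec (axialVec x.1 - axialVec y.1) (axialVec x.1 - axialVec y.1)) := by
  simp only [symCofLift, Prod.fst_add, Prod.snd_add, Prod.smul_fst, Prod.smul_snd,
    symPart_add_smul, axialVec_add_smul, vecMulVec_add_smul_self hab]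
  refine Prod.ext rfl ?_
  dsimp only
  module

lemma convexOn_comp_symCofLift (hg : ConvexOn ℝ {p : M₃ × M₃ | p.1.IsSymm ∧ p.2.IsSymm} g)
    (hNSD : PartialSubgradientsNegSemidef g) : ConvexOn ℝ Set.univ (g ∘ symCofLift) := by
  refine ⟨convex_univ, fun x _ y _ a b ha hb hab => ?_⟩
  have hmem := convex_setOf_isSymm_prod (isSymm_symCofLift x) (isSymm_symCofLift y) ha hb hab
  calc g (symCofLift (a • x + b • y))
      ≤ g (a • symCofLift x + b • symCofLift y) := by
        rw [symCofLift_add_smul hab]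
        exact hNSD.le_of_add_smul_vecMulVec hg hmem.1 hmem.2 (mul_nonneg ha hb) _
    _ ≤ a • g (symCofLift x) + b • g (symCofLift y) :=
        hg.2 (isSymm_symCofLift x) (isSymm_symCofLift y) ha hb hab

theorem symPolyconvex3_of_convexOn {f : M₃ → ℝ}
    (hg : ConvexOn ℝ {p : M₃ × M₃ | p.1.IsSymm ∧ p.2.IsSymm} g)
    (hNSD : PartialSubgradientsNegSemidef g) (hfg : ∀ ε : M₃, ε.IsSymm → f ε = g (ε, cof ε)) :
    SymPolyconvex3 f :=
  ⟨g ∘ symCofLift, convexOn_comp_symCofLift hg hNSD, fun F => by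
    simp [symCofLift, ← cof_symPart, hfg _ (isSymm_symPart F)]⟩

end Backward

theorem symmetric_polyconvexity_char_3d (f : Matrix (Fin 3) (Fin 3) ℝ → ℝ) :
    SymPolyconvex3 f ↔
      ∃ g : Matrix (Fin 3) (Fin 3) ℝ × Matrix (Fin 3) (Fin 3) ℝ → ℝ,
        ConvexOn ℝ {p : Matrix (Fin 3) (Fin 3) ℝ × Matrix (Fin 3) (Fin 3) ℝ |
          p.1.IsSymm ∧ p.2.IsSymm} g ∧
        (∀ ε η : Matrix (Fin 3) (Fin 3) ℝ, ε.IsSymm → η.IsSymm →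
          ∀ B : Matrix (Fin 3) (Fin 3) ℝ, B.IsSymm →
            (∀ η' : Matrix (Fin 3) (Fin 3) ℝ, η'.IsSymm →
              g (ε, η) + mdot B (η' - η) ≤ g (ε, η')) →
            NegSemidefM B) ∧
        (∀ ε : Matrix (Fin 3) (Fin 3) ℝ, ε.IsSymm → f ε = g (ε, cof ε)) := by
  refine ⟨fun hf => ?_, fun ⟨g, hg, hNSD, hfg⟩ => symPolyconvex3_of_convexOn hg hNSD hfg⟩
  have hne := hf.symPolyMinorants_nonempty
  exact ⟨symPolyEnvelope f, convexOn_symPolyEnvelope hne,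
    partialSubgradientsNegSemidef_symPolyEnvelope hne,
    fun ε hε => (hf.symPolyEnvelope_cof_eq hε).symm⟩
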